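/- arXiv:1307.6938 — 8 statements merged into one kernel-verified Lean document; each statement's English description precedes it below -/
import Mathlib

section
/- Let r : ℝ → ℝ be twice continuously differentiable with 0 < r(t) < 1 for all t ∈ ℝ, and suppose that r satisfies the equation (1 − r(t)²)·r(t)·r''(t) = (1 − 2 r(t)²)·(2 r'(t)² + r(t)²(1 − r(t)²)) for all t ∈ ℝ. Then the function t ↦ r'(t)²/(r(t)⁴(1 − r(t)²)²) + 1/(r(t)²(1 − r(t)²)) is constant on ℝ. -/
/-!
Write `f(x) = x²(1 − x²)`, so that the conserved quantity is `E = r'²/f(r)² + 1/f(r)`.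
Differentiating, `E' = r'/f(r)³ · (2 r'' f(r) − f'(r)(2r'² + f(r)))`, and since
`f'(x) = 2x(1 − 2x²)` the bracket is `2r` times the difference of the two sides of the ODE.
-/

noncomputable def energy (f r v : ℝ → ℝ) (t : ℝ) : ℝ :=
  v t ^ 2 / f (r t) ^ 2 + 1 / f (r t)

theorem hasDerivAt_energy {f r v : ℝ → ℝ} {f' a t : ℝ} (hf : HasDerivAt f f' (r t))
    (hr : HasDerivAt r (v t) t) (hv : HasDerivAt v a t) (hf0 : f (r t) ≠ 0) :
    HasDerivAt (energy f r v)
      (v t / f (r t) ^ 3 * (2 * a * f (r t) - f' * (2 * v t ^ 2 + f (r t)))) t := by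
  have hfr : HasDerivAt (fun s => f (r s)) (f' * v t) t := hf.comp t hr
  have hE := ((hv.pow 2).div (hfr.pow 2) (pow_ne_zero 2 hf0)).add
    ((hasDerivAt_const t (1 : ℝ)).div hfr hf0)
  refine hE.congr_deriv ?_
  simp only [Pi.pow_apply]
  field_simp
  ring

theorem energy_eq_of_ode {f f' r : ℝ → ℝ} (hf : ∀ x, HasDerivAt f (f' x) x)
    (hr : Differentiable ℝ r) (hr' : Differentiable ℝ (deriv r)) (hf0 : ∀ t, f (r t) ≠ 0)
    (hode : ∀ t, 2 * deriv (deriv r) t * f (r t) = f' (r t) * (2 * deriv r t ^ 2 + f (r t)))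
    (t₁ t₂ : ℝ) : energy f r (deriv r) t₁ = energy f r (deriv r) t₂ := by
  have hE : ∀ t, HasDerivAt (energy f r (deriv r)) 0 t := fun t => by
    simpa only [hode t, sub_self, mul_zero] using
      hasDerivAt_energy (hf (r t)) (hr t).hasDerivAt (hr' t).hasDerivAt (hf0 t)
  exact is_const_of_deriv_eq_zero (fun t => (hE t).differentiableAt) (fun t => (hE t).deriv)
    t₁ t₂

/-- The quantity `r'(t)²/(r(t)⁴(1−r(t)²)²) + 1/(r(t)²(1−r(t)²))` is conserved along
solutions of the minimal-surface ODE
`(1 − r²)·r·r'' = (1 − 2r²)·(2r'² + r²(1 − r²))`. -/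
theorem conserved_quantity_of_minimal_ode
    (r : ℝ → ℝ) (hr : ContDiff ℝ 2 r)
    (hr01 : ∀ t : ℝ, 0 < r t ∧ r t < 1)
    (hode : ∀ t : ℝ, (1 - r t ^ 2) * r t * deriv (deriv r) t
      = (1 - 2 * r t ^ 2) * (2 * (deriv r t) ^ 2 + r t ^ 2 * (1 - r t ^ 2))) :
    ∀ t₁ t₂ : ℝ,
      (deriv r t₁) ^ 2 / (r t₁ ^ 4 * (1 - r t₁ ^ 2) ^ 2) + 1 / (r t₁ ^ 2 * (1 - r t₁ ^ 2))
        = (deriv r t₂) ^ 2 / (r t₂ ^ 4 * (1 - r t₂ ^ 2) ^ 2)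
          + 1 / (r t₂ ^ 2 * (1 - r t₂ ^ 2)) := by
  set f : ℝ → ℝ := fun x => x ^ 2 * (1 - x ^ 2)
  have hf : ∀ x, HasDerivAt f (2 * x * (1 - 2 * x ^ 2)) x := fun x => by
    refine ((hasDerivAt_pow 2 x).fun_mul
      ((hasDerivAt_const x 1).fun_sub (hasDerivAt_pow 2 x))).congr_deriv ?_
    ring
  have hf0 : ∀ t, f (r t) ≠ 0 := fun t => by
    obtain ⟨h0, h1⟩ := hr01 t
    have : 0 < 1 - r t ^ 2 := by nlinarith
    positivity
  have hode_f : ∀ t, 2 * deriv (deriv r) t * f (r t)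
      = 2 * r t * (1 - 2 * r t ^ 2) * (2 * deriv r t ^ 2 + f (r t)) := fun t => by
    linear_combination 2 * r t * hode t
  intro t₁ t₂
  have hE := energy_eq_of_ode hf (hr.differentiable two_ne_zero) hr.differentiable_deriv_two hf0
    hode_f t₁ t₂
  simpa only [energy, f, mul_pow, ← pow_mul] using hE
end

section
/- Let c > 0 and let r : ℝ → ℝ be differentiable with 0 < r(t) < 1 for all t ∈ ℝ, and suppose that r'(t)²/(r(t)⁴(1 − r(t)²)²) + 1/(r(t)²(1 − r(t)²)) = 4/c² for all t ∈ ℝ. Then c ≤ 1, and for all t ∈ ℝ one has (1 − √(1 − c²))/2 ≤ r(t)² ≤ (1 + √(1 − c²))/2. -/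
/-- If the conserved quantity of the minimal-surface ODE equals `4/c²` along `r`, with
`0 < r < 1`, then `c ≤ 1` and `(1 − √(1−c²))/2 ≤ r(t)² ≤ (1 + √(1−c²))/2` for all `t`. -/
theorem range_of_solution_with_conserved_quantity
    (c : ℝ) (hc : 0 < c) (r : ℝ → ℝ) (hr : Differentiable ℝ r)
    (hr01 : ∀ t : ℝ, 0 < r t ∧ r t < 1)
    (hcons : ∀ t : ℝ,
      (deriv r t) ^ 2 / (r t ^ 4 * (1 - r t ^ 2) ^ 2) + 1 / (r t ^ 2 * (1 - r t ^ 2))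
        = 4 / c ^ 2) :
    c ≤ 1 ∧ ∀ t : ℝ,
      (1 - Real.sqrt (1 - c ^ 2)) / 2 ≤ r t ^ 2 ∧
      r t ^ 2 ≤ (1 + Real.sqrt (1 - c ^ 2)) / 2 := by
  have key : ∀ t : ℝ, c ^ 2 ≤ 4 * (r t ^ 2 * (1 - r t ^ 2)) := by
    intro t
    obtain ⟨h0, h1⟩ := hr01 t
    have hx0 : 0 < r t ^ 2 := by positivity
    have hx1 : r t ^ 2 < 1 := by nlinarith
    have hxx : 0 < r t ^ 2 * (1 - r t ^ 2) := by nlinarith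
    have hA : 0 < r t ^ 4 * (1 - r t ^ 2) ^ 2 := by nlinarith [sq_nonneg (r t ^ 2), sq_nonneg (1 - r t ^ 2)]
    have hd : 0 ≤ (deriv r t) ^ 2 / (r t ^ 4 * (1 - r t ^ 2) ^ 2) := by positivity
    have h := hcons t
    have hle : 1 / (r t ^ 2 * (1 - r t ^ 2)) ≤ 4 / c ^ 2 := by linarith
    have hc2 : 0 < c ^ 2 := by positivity
    rw [div_le_div_iff₀ hxx hc2] at hle
    linarith
  have hc1 : c ≤ 1 := by
    have h := key 0
    nlinarith [sq_nonneg (2 * (r 0 ^ 2) - 1)]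
  have hs0 : (0:ℝ) ≤ Real.sqrt (1 - c ^ 2) := Real.sqrt_nonneg _
  have hs2 : Real.sqrt (1 - c ^ 2) ^ 2 = 1 - c ^ 2 := by
    rw [sq, Real.mul_self_sqrt (by nlinarith)]
  refine ⟨hc1, fun t => ?_⟩
  have h := key t
  constructor
  · nlinarith [sq_nonneg (2 * (r t ^ 2) - 1 + Real.sqrt (1 - c ^ 2)),
      sq_nonneg (2 * (r t ^ 2) - 1 - Real.sqrt (1 - c ^ 2))]
  · nlinarith [sq_nonneg (2 * (r t ^ 2) - 1 + Real.sqrt (1 - c ^ 2)),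
      sq_nonneg (2 * (r t ^ 2) - 1 - Real.sqrt (1 - c ^ 2))]
end

section
/- Let r : ℝ → ℝ be twice continuously differentiable with 0 < r(t) < 1 for all t ∈ ℝ, let F(s,t) = (√(1 − r(t)²) cos s, √(1 − r(t)²) sin s, r(t) cos t, r(t) sin t) ∈ ℝ⁴, and let ν(s,t) = [ r(t)²√(1 − r(t)²)·(cos s, sin s, 0, 0) − r(t)(1 − r(t)²)·(0, 0, cos t, sin t) − r'(t)·(0, 0, sin t, −cos t) ] / √(r'(t)² + r(t)²(1 − r(t)²)). Then for all (s,t) ∈ ℝ²: ‖ν(s,t)‖ = 1, ⟨ν(s,t), F(s,t)⟩ = 0, ⟨ν(s,t), ∂F/∂s⟩ = 0, and ⟨ν(s,t), ∂F/∂t⟩ = 0, where ∂F/∂s and ∂F/∂t denote the derivatives of the maps s ↦ F(s,t) and t ↦ F(s,t) respectively. -/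
open scoped RealInnerProductSpace

/-!
With `a = √(1 - r²)`, the `t`-derivative of `F` has first two components `a' (cos s, sin s)` with
`a' = -r r' / a`. Every claim then becomes, after expanding the inner products in coordinates, a
polynomial identity modulo `a² = 1 - r²` and `sin² + cos² = 1`; the positivity of
`r'² + r²(1 - r²)` makes the normalisation of `ν` legitimate.
-/

open Real WithLp

theorem hasDerivAt_toLp_vec4 {f₀ f₁ f₂ f₃ : ℝ → ℝ} {a₀ a₁ a₂ a₃ x : ℝ}
    (h₀ : HasDerivAt f₀ a₀ x) (h₁ : HasDerivAt f₁ a₁ x) (h₂ : HasDerivAt f₂ a₂ x)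
    (h₃ : HasDerivAt f₃ a₃ x) :
    HasDerivAt (fun x => toLp 2 ![f₀ x, f₁ x, f₂ x, f₃ x]) (toLp 2 ![a₀, a₁, a₂, a₃]) x := by
  have hnil : HasDerivAt (fun _ => ![]) ![] x :=
    (hasDerivAt_const x (![] : Fin 0 → ℝ)).congr_deriv (Subsingleton.elim _ _)
  have hvec : HasDerivAt (fun x => ![f₀ x, f₁ x, f₂ x, f₃ x]) ![a₀, a₁, a₂, a₃] x :=
    h₀.finCons (h₁.finCons (h₂.finCons (h₃.finCons hnil)))
  exact (PiLp.hasFDerivAt_toLp 2 _).comp_hasDerivAt x hvec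

theorem inner_toLp_vec4 (a₀ a₁ a₂ a₃ b₀ b₁ b₂ b₃ : ℝ) :
    ⟪toLp 2 ![a₀, a₁, a₂, a₃], toLp 2 ![b₀, b₁, b₂, b₃]⟫
      = a₀ * b₀ + a₁ * b₁ + a₂ * b₂ + a₃ * b₃ := by
  simp [PiLp.inner_apply, Fin.sum_univ_four, mul_comm]

theorem HasDerivAt.sqrt_one_sub_sq {f : ℝ → ℝ} {f' x : ℝ} (hf : HasDerivAt f f' x)
    (hx : f x ^ 2 < 1) :
    HasDerivAt (fun y => √(1 - f y ^ 2)) (-(f x * f') / √(1 - f x ^ 2)) x := by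
  convert ((hf.fun_pow 2).const_sub 1).sqrt (by linarith) using 1
  field_simp
  ring

noncomputable def rotImmersion (r : ℝ → ℝ) (s t : ℝ) : EuclideanSpace ℝ (Fin 4) :=
  toLp 2 ![√(1 - r t ^ 2) * cos s, √(1 - r t ^ 2) * sin s, r t * cos t, r t * sin t]

noncomputable def rotNormal (r : ℝ → ℝ) (s t : ℝ) : EuclideanSpace ℝ (Fin 4) :=
  (√(deriv r t ^ 2 + r t ^ 2 * (1 - r t ^ 2)))⁻¹ •
    ((r t ^ 2 * √(1 - r t ^ 2)) • toLp 2 ![cos s, sin s, 0, 0]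
      - (r t * (1 - r t ^ 2)) • toLp 2 ![0, 0, cos t, sin t]
      - deriv r t • toLp 2 ![0, 0, sin t, -cos t])

section

variable {r : ℝ → ℝ} {s t : ℝ}

theorem rotNormal_eq : rotNormal r s t =
    (√(deriv r t ^ 2 + r t ^ 2 * (1 - r t ^ 2)))⁻¹ • toLp 2
      ![r t ^ 2 * √(1 - r t ^ 2) * cos s, r t ^ 2 * √(1 - r t ^ 2) * sin s,
        -(r t * (1 - r t ^ 2) * cos t) - deriv r t * sin t,
        -(r t * (1 - r t ^ 2) * sin t) + deriv r t * cos t] := by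
  rw [rotNormal]
  congr 1
  ext i
  fin_cases i <;> simp [mul_assoc]

theorem hasDerivAt_rotImmersion_left :
    HasDerivAt (rotImmersion r · t)
      (toLp 2 ![-(√(1 - r t ^ 2) * sin s), √(1 - r t ^ 2) * cos s, 0, 0]) s := by
  refine (hasDerivAt_toLp_vec4 ((hasDerivAt_cos s).const_mul √(1 - r t ^ 2))
    ((hasDerivAt_sin s).const_mul √(1 - r t ^ 2)) (hasDerivAt_const s (r t * cos t))
    (hasDerivAt_const s (r t * sin t))).congr_deriv ?_
  simp

theorem hasDerivAt_rotImmersion_right (hr : HasDerivAt r (deriv r t) t) (ht : r t ^ 2 < 1) :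
    HasDerivAt (rotImmersion r s)
      (toLp 2 ![-(r t * deriv r t) / √(1 - r t ^ 2) * cos s,
        -(r t * deriv r t) / √(1 - r t ^ 2) * sin s,
        deriv r t * cos t - r t * sin t, deriv r t * sin t + r t * cos t]) t := by
  have ha := hr.sqrt_one_sub_sq ht
  refine (hasDerivAt_toLp_vec4 (ha.mul_const (cos s)) (ha.mul_const (sin s))
    (hr.mul (hasDerivAt_cos t)) (hr.mul (hasDerivAt_sin t))).congr_deriv ?_
  simp [sub_eq_add_neg]

theorem inner_rotNormal_rotImmersion (ht : r t ^ 2 ≤ 1) :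
    ⟪rotNormal r s t, rotImmersion r s t⟫ = 0 := by
  have ha : √(1 - r t ^ 2) ^ 2 = 1 - r t ^ 2 := sq_sqrt (by linarith)
  rw [rotNormal_eq, rotImmersion, real_inner_smul_left, inner_toLp_vec4, mul_eq_zero]
  right
  linear_combination (r t ^ 2 * (cos s ^ 2 + sin s ^ 2)) * ha
    + r t ^ 2 * (1 - r t ^ 2) * (sin_sq_add_cos_sq s - sin_sq_add_cos_sq t)

theorem inner_rotNormal_deriv_left :
    ⟪rotNormal r s t, deriv (rotImmersion r · t) s⟫ = 0 := by
  rw [hasDerivAt_rotImmersion_left.deriv, rotNormal_eq, real_inner_smul_left, inner_toLp_vec4]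
  ring

theorem inner_rotNormal_deriv_right (hr : HasDerivAt r (deriv r t) t) (ht : r t ^ 2 < 1) :
    ⟪rotNormal r s t, deriv (rotImmersion r s) t⟫ = 0 := by
  have ha : √(1 - r t ^ 2) ≠ 0 := (sqrt_pos.2 (by linarith)).ne'
  rw [(hasDerivAt_rotImmersion_right hr ht).deriv, rotNormal_eq, real_inner_smul_left,
    inner_toLp_vec4, mul_eq_zero]
  right
  field_simp
  linear_combination r t ^ 3 * deriv r t * (sin_sq_add_cos_sq t - sin_sq_add_cos_sq s)

theorem norm_rotNormal (h0 : r t ≠ 0) (ht : r t ^ 2 < 1) : ‖rotNormal r s t‖ = 1 := by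
  have ha : √(1 - r t ^ 2) ^ 2 = 1 - r t ^ 2 := sq_sqrt (by linarith)
  have hQ : 0 < deriv r t ^ 2 + r t ^ 2 * (1 - r t ^ 2) :=
    add_pos_of_nonneg_of_pos (sq_nonneg _) (mul_pos (by positivity) (sub_pos.2 ht))
  rw [norm_eq_sqrt_real_inner, rotNormal_eq, real_inner_smul_left, real_inner_smul_right,
    inner_toLp_vec4, sqrt_eq_one]
  field_simp
  rw [sq_sqrt hQ.le]
  linear_combination r t ^ 4 * (cos s ^ 2 + sin s ^ 2) * ha
    + r t ^ 4 * (1 - r t ^ 2) * sin_sq_add_cos_sq s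
    + (r t ^ 2 * (1 - r t ^ 2) ^ 2 + deriv r t ^ 2) * sin_sq_add_cos_sq t

end

/-- The vector field `ν` is a unit normal along the rotationally symmetric immersion
`F(s,t) = (√(1−r²) cos s, √(1−r²) sin s, r cos t, r sin t)` into `S³ ⊂ ℝ⁴`. -/
theorem unit_normal_of_rotational_immersion
    (r : ℝ → ℝ) (hr : ContDiff ℝ 2 r) (hr01 : ∀ t : ℝ, 0 < r t ∧ r t < 1)
    (F ν : ℝ → ℝ → EuclideanSpace ℝ (Fin 4))
    (hF : ∀ s t : ℝ, F s t = (WithLp.equiv 2 (Fin 4 → ℝ)).symm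
      ![Real.sqrt (1 - r t ^ 2) * Real.cos s,
        Real.sqrt (1 - r t ^ 2) * Real.sin s,
        r t * Real.cos t,
        r t * Real.sin t])
    (hν : ∀ s t : ℝ, ν s t =
      (Real.sqrt ((deriv r t) ^ 2 + r t ^ 2 * (1 - r t ^ 2)))⁻¹ •
        ((r t ^ 2 * Real.sqrt (1 - r t ^ 2)) •
            (WithLp.equiv 2 (Fin 4 → ℝ)).symm ![Real.cos s, Real.sin s, 0, 0]
          - (r t * (1 - r t ^ 2)) •
            (WithLp.equiv 2 (Fin 4 → ℝ)).symm ![0, 0, Real.cos t, Real.sin t]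
          - deriv r t •
            (WithLp.equiv 2 (Fin 4 → ℝ)).symm ![0, 0, Real.sin t, -Real.cos t])) :
    ∀ s t : ℝ,
      ‖ν s t‖ = 1 ∧
      ⟪ν s t, F s t⟫ = 0 ∧
      ⟪ν s t, deriv (fun s' => F s' t) s⟫ = 0 ∧
      ⟪ν s t, deriv (fun t' => F s t') t⟫ = 0 := by
  obtain rfl : F = rotImmersion r := funext₂ hF
  obtain rfl : ν = rotNormal r := funext₂ hν
  intro s t
  obtain ⟨h0, h1⟩ := hr01 t
  have ht : r t ^ 2 < 1 := by nlinarith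
  exact ⟨norm_rotNormal h0.ne' ht, inner_rotNormal_rotImmersion ht.le, inner_rotNormal_deriv_left,
    inner_rotNormal_deriv_right (hr.differentiable two_ne_zero t).hasDerivAt ht⟩
end

section
/- Let r : ℝ → ℝ be twice continuously differentiable with 0 < r(t) < 1 for all t ∈ ℝ, let F(s,t) = (√(1 − r(t)²) cos s, √(1 − r(t)²) sin s, r(t) cos t, r(t) sin t) ∈ ℝ⁴, and let ν(s,t) = [ r(t)²√(1 − r(t)²)·(cos s, sin s, 0, 0) − r(t)(1 − r(t)²)·(0, 0, cos t, sin t) − r'(t)·(0, 0, sin t, −cos t) ] / √(r'(t)² + r(t)²(1 − r(t)²)). Then the identity ⟨∂ν/∂s, ∂F/∂s⟩/⟨∂F/∂s, ∂F/∂s⟩ + ⟨∂ν/∂t, ∂F/∂t⟩/⟨∂F/∂t, ∂F/∂t⟩ = 0 holds for all (s,t) ∈ ℝ² if and only if r satisfies (1 − r(t)²)·r(t)·r''(t) = (1 − 2 r(t)²)·(2 r'(t)² + r(t)²(1 − r(t)²)) for all t ∈ ℝ. -/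
/-!
Both `F` and the unnormalised normal `N = √(r'² + r²(1 - r²)) • ν` have the shape
`(a cos s, a sin s, b cos t - c sin t, b sin t + c cos t)` with `a, b, c` depending on `t` only.
For vectors of this shape the inner product is `a a' + b b' + c c'`, and `t`-derivatives keep the
shape. Since `N ⊥ ∂F/∂t`, the derivative of the normalising factor drops out of
`⟨∂ν/∂t, ∂F/∂t⟩`, and with `|∂F/∂t|² = (r'² + r²(1 - r²)) / (1 - r²)` the mean curvature equals
`(r'² + r²(1 - r²))^(-3/2)` times the difference of the two sides of the ODE.
-/

open scoped RealInnerProductSpace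
open Real

noncomputable section

/-- The vector `(a, 0, b, c)` rotated by `s` in the `x₁x₂`-plane and by `t` in the `x₃x₄`-plane. -/
def doubleRot (a b c s t : ℝ) : EuclideanSpace ℝ (Fin 4) :=
  !₂[a * cos s, a * sin s, b * cos t - c * sin t, b * sin t + c * cos t]

lemma inner_toLp_fin_four (a b c d a' b' c' d' : ℝ) :
    ⟪!₂[a, b, c, d], !₂[a', b', c', d']⟫ = a * a' + b * b' + c * c' + d * d' := by
  simp [EuclideanSpace.inner_toLp_toLp, dotProduct, Fin.sum_univ_four, mul_comm]

lemma inner_doubleRot (a b c a' b' c' s t : ℝ) :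
    ⟪doubleRot a b c s t, doubleRot a' b' c' s t⟫ = a * a' + b * b' + c * c' := by
  rw [doubleRot, doubleRot, inner_toLp_fin_four]
  linear_combination a * a' * sin_sq_add_cos_sq s + (b * b' + c * c') * sin_sq_add_cos_sq t

lemma hasDerivAt_toLp_fin_four {a b c d : ℝ → ℝ} {a' b' c' d' x : ℝ}
    (ha : HasDerivAt a a' x) (hb : HasDerivAt b b' x)
    (hc : HasDerivAt c c' x) (hd : HasDerivAt d d' x) :
    HasDerivAt (fun y => !₂[a y, b y, c y, d y]) !₂[a', b', c', d'] x := by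
  have h : HasDerivAt (fun y => ![a y, b y, c y, d y]) ![a', b', c', d'] x := by
    rw [hasDerivAt_pi]
    intro i
    fin_cases i <;> simpa
  exact (PiLp.hasFDerivAt_toLp 2 _).comp_hasDerivAt x h

lemma hasDerivAt_doubleRot_fst (a b c s t : ℝ) :
    HasDerivAt (doubleRot a b c · t) !₂[-(a * sin s), a * cos s, 0, 0] s := by
  unfold doubleRot
  simpa using hasDerivAt_toLp_fin_four ((hasDerivAt_cos s).const_mul a)
    ((hasDerivAt_sin s).const_mul a) (hasDerivAt_const s (b * cos t - c * sin t))
    (hasDerivAt_const s (b * sin t + c * cos t))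

lemma hasDerivAt_doubleRot_snd {a b c : ℝ → ℝ} {a' b' c' : ℝ} (s t : ℝ)
    (ha : HasDerivAt a a' t) (hb : HasDerivAt b b' t) (hc : HasDerivAt c c' t) :
    HasDerivAt (fun t => doubleRot (a t) (b t) (c t) s t)
      (doubleRot a' (b' - c t) (c' + b t) s t) t := by
  unfold doubleRot
  convert hasDerivAt_toLp_fin_four (ha.mul_const (cos s)) (ha.mul_const (sin s))
    ((hb.fun_mul (hasDerivAt_cos t)).fun_sub (hc.fun_mul (hasDerivAt_sin t)))
    ((hb.fun_mul (hasDerivAt_sin t)).fun_add (hc.fun_mul (hasDerivAt_cos t))) using 1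
  congr 1
  funext i
  fin_cases i <;> simp <;> ring

lemma inner_deriv_doubleRot_fst_div (w A B C a b c s t : ℝ) (ha : a ≠ 0) :
    ⟪deriv (fun s => w • doubleRot A B C s t) s, deriv (doubleRot a b c · t) s⟫
      / ⟪deriv (doubleRot a b c · t) s, deriv (doubleRot a b c · t) s⟫ = w * A / a := by
  rw [((hasDerivAt_doubleRot_fst A B C s t).fun_const_smul w).deriv,
    (hasDerivAt_doubleRot_fst a b c s t).deriv, real_inner_smul_left,
    inner_toLp_fin_four, inner_toLp_fin_four]
  field_simp
  ring

lemma inner_deriv_smul_of_inner_eq_zero {E : Type*} [NormedAddCommGroup E]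
    [InnerProductSpace ℝ E] {w : ℝ → ℝ} {N : ℝ → E} {N' X : E} {t : ℝ}
    (hw : DifferentiableAt ℝ w t) (hN : HasDerivAt N N' t) (hX : ⟪N t, X⟫ = 0) :
    ⟪deriv (fun t => w t • N t) t, X⟫ = w t * ⟪N', X⟫ := by
  rw [(hw.hasDerivAt.fun_smul hN).deriv, inner_add_left, real_inner_smul_left,
    real_inner_smul_left, hX, mul_zero, add_zero]

lemma HasDerivAt.fun_sq {r : ℝ → ℝ} {p t : ℝ} (hr : HasDerivAt r p t) :
    HasDerivAt (fun t => r t ^ 2) (2 * r t * p) t := by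
  simpa [mul_assoc] using hr.fun_pow 2

lemma HasDerivAt.sqrt_one_sub_sq_s6 {r : ℝ → ℝ} {p t : ℝ} (hr : HasDerivAt r p t)
    (h : r t ^ 2 < 1) :
    HasDerivAt (fun t => √(1 - r t ^ 2)) (-(r t * p) / √(1 - r t ^ 2)) t := by
  convert (hr.fun_sq.const_sub 1).sqrt (sub_pos.mpr h).ne' using 1
  field_simp

lemma sq_add_sq_mul_one_sub_sq_pos (p : ℝ) {ρ : ℝ} (h0 : 0 < ρ) (h1 : ρ < 1) :
    0 < p ^ 2 + ρ ^ 2 * (1 - ρ ^ 2) := by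
  have : 0 < 1 - ρ ^ 2 := by nlinarith
  positivity

lemma meanCurvature_identity {ρ p q u W : ℝ} (hu : u ≠ 0) (hW : W ≠ 0)
    (hu2 : u ^ 2 = 1 - ρ ^ 2) (hW2 : W ^ 2 = p ^ 2 + ρ ^ 2 * (1 - ρ ^ 2)) :
    W⁻¹ * (ρ ^ 2 * u) / u
      + W⁻¹ * ((2 * ρ * p * u + ρ ^ 2 * (-(ρ * p) / u)) * (-(ρ * p) / u)
          + (-(p * (1 - ρ ^ 2) + ρ * -(2 * ρ * p)) - p) * p + (q + -(ρ * (1 - ρ ^ 2))) * ρ)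
        / (-(ρ * p) / u * (-(ρ * p) / u) + p * p + ρ * ρ)
      = W⁻¹ ^ 3 * ((1 - ρ ^ 2) * ρ * q - (1 - 2 * ρ ^ 2) * (2 * p ^ 2 + ρ ^ 2 * (1 - ρ ^ 2))) := by
  have hFtFt : -(ρ * p) / u * (-(ρ * p) / u) + p * p + ρ * ρ = W ^ 2 / u ^ 2 := by
    field_simp
    linear_combination (ρ ^ 2 + p ^ 2) * hu2 - hW2
  rw [hFtFt]
  field_simp
  rw [hu2, hW2]
  ring

def odeResidual (r : ℝ → ℝ) (t : ℝ) : ℝ :=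
  (1 - r t ^ 2) * r t * deriv (deriv r) t
    - (1 - 2 * r t ^ 2) * (2 * deriv r t ^ 2 + r t ^ 2 * (1 - r t ^ 2))

theorem meanCurvature_eq_mul_odeResidual {r : ℝ → ℝ} {F ν : ℝ → ℝ → EuclideanSpace ℝ (Fin 4)}
    {t : ℝ} (hr1 : DifferentiableAt ℝ r t) (hr2 : DifferentiableAt ℝ (deriv r) t)
    (hrt : 0 < r t ∧ r t < 1)
    (hF : ∀ s t, F s t = doubleRot (√(1 - r t ^ 2)) (r t) 0 s t)
    (hν : ∀ s t, ν s t = (√(deriv r t ^ 2 + r t ^ 2 * (1 - r t ^ 2)))⁻¹ •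
      doubleRot (r t ^ 2 * √(1 - r t ^ 2)) (-(r t * (1 - r t ^ 2))) (deriv r t) s t)
    (s : ℝ) :
    ⟪deriv (fun s' => ν s' t) s, deriv (fun s' => F s' t) s⟫
        / ⟪deriv (fun s' => F s' t) s, deriv (fun s' => F s' t) s⟫
      + ⟪deriv (fun t' => ν s t') t, deriv (fun t' => F s t') t⟫
        / ⟪deriv (fun t' => F s t') t, deriv (fun t' => F s t') t⟫
      = (√(deriv r t ^ 2 + r t ^ 2 * (1 - r t ^ 2)))⁻¹ ^ 3 * odeResidual r t := by
  obtain ⟨hρ0, hρ1⟩ := hrt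
  have hu2 : 0 < 1 - r t ^ 2 := by nlinarith
  have hu : 0 < √(1 - r t ^ 2) := sqrt_pos.mpr hu2
  have hE := sq_add_sq_mul_one_sub_sq_pos (deriv r t) hρ0 hρ1
  have hW : 0 < √(deriv r t ^ 2 + r t ^ 2 * (1 - r t ^ 2)) := sqrt_pos.mpr hE
  have hdr := hr1.hasDerivAt
  have hsqrt := hdr.sqrt_one_sub_sq_s6 (by linarith)
  have hFt := hasDerivAt_doubleRot_snd s t hsqrt hdr (hasDerivAt_const t 0)
  have hNt := hasDerivAt_doubleRot_snd s t (hdr.fun_sq.fun_mul hsqrt)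
    (hdr.fun_mul (hdr.fun_sq.const_sub 1)).fun_neg hr2.hasDerivAt
  have hw : DifferentiableAt ℝ (fun t => (√(deriv r t ^ 2 + r t ^ 2 * (1 - r t ^ 2)))⁻¹) t :=
    (((hr2.pow 2).add ((hr1.pow 2).mul ((hr1.pow 2).const_sub 1))).sqrt
      hE.ne').inv hW.ne'
  simp only [hF, hν]
  rw [inner_deriv_doubleRot_fst_div _ _ _ _ _ _ _ _ _ hu.ne', hFt.deriv,
    inner_deriv_smul_of_inner_eq_zero hw hNt, inner_doubleRot, inner_doubleRot]
  · simp only [odeResidual, sub_zero, zero_add]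
    exact meanCurvature_identity hu.ne' hW.ne' (sq_sqrt hu2.le) (sq_sqrt hE.le)
  · rw [inner_doubleRot]
    field_simp
    ring

end

/-- The rotationally symmetric surface generated by `r` has vanishing mean curvature
if and only if `r` solves the ODE
`(1 − r²)·r·r'' = (1 − 2r²)·(2r'² + r²(1 − r²))`. -/
theorem mean_curvature_zero_iff_ode
    (r : ℝ → ℝ) (hr : ContDiff ℝ 2 r) (hr01 : ∀ t : ℝ, 0 < r t ∧ r t < 1)
    (F ν : ℝ → ℝ → EuclideanSpace ℝ (Fin 4))
    (hF : ∀ s t : ℝ, F s t = (WithLp.equiv 2 (Fin 4 → ℝ)).symm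
      ![Real.sqrt (1 - r t ^ 2) * Real.cos s,
        Real.sqrt (1 - r t ^ 2) * Real.sin s,
        r t * Real.cos t,
        r t * Real.sin t])
    (hν : ∀ s t : ℝ, ν s t =
      (Real.sqrt ((deriv r t) ^ 2 + r t ^ 2 * (1 - r t ^ 2)))⁻¹ •
        ((r t ^ 2 * Real.sqrt (1 - r t ^ 2)) •
            (WithLp.equiv 2 (Fin 4 → ℝ)).symm ![Real.cos s, Real.sin s, 0, 0]
          - (r t * (1 - r t ^ 2)) •
            (WithLp.equiv 2 (Fin 4 → ℝ)).symm ![0, 0, Real.cos t, Real.sin t]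
          - deriv r t •
            (WithLp.equiv 2 (Fin 4 → ℝ)).symm ![0, 0, Real.sin t, -Real.cos t])) :
    (∀ s t : ℝ,
        ⟪deriv (fun s' => ν s' t) s, deriv (fun s' => F s' t) s⟫
            / ⟪deriv (fun s' => F s' t) s, deriv (fun s' => F s' t) s⟫
          + ⟪deriv (fun t' => ν s t') t, deriv (fun t' => F s t') t⟫
            / ⟪deriv (fun t' => F s t') t, deriv (fun t' => F s t') t⟫ = 0)
      ↔ (∀ t : ℝ, (1 - r t ^ 2) * r t * deriv (deriv r) t
          = (1 - 2 * r t ^ 2) * (2 * (deriv r t) ^ 2 + r t ^ 2 * (1 - r t ^ 2))) := by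
  have hr1 : Differentiable ℝ r := hr.differentiable two_ne_zero
  have hr2 : Differentiable ℝ (deriv r) := (hr.deriv' (n := 1)).differentiable one_ne_zero
  have hF' : ∀ s t, F s t = doubleRot (√(1 - r t ^ 2)) (r t) 0 s t := fun s t => by
    rw [hF, doubleRot, WithLp.equiv_symm_apply]
    simp
  have hν' : ∀ s t, ν s t = (√(deriv r t ^ 2 + r t ^ 2 * (1 - r t ^ 2)))⁻¹ •
      doubleRot (r t ^ 2 * √(1 - r t ^ 2)) (-(r t * (1 - r t ^ 2))) (deriv r t) s t :=
    fun s t => by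
      rw [hν, doubleRot]
      congr 1
      ext i
      fin_cases i <;> simp
  have key s t := meanCurvature_eq_mul_odeResidual (hr1 t) (hr2 t) (hr01 t) hF' hν' s
  have hW t : (√(deriv r t ^ 2 + r t ^ 2 * (1 - r t ^ 2)))⁻¹ ^ 3 ≠ 0 := by
    have := sq_add_sq_mul_one_sub_sq_pos (deriv r t) (hr01 t).1 (hr01 t).2
    positivity
  simp only [key, mul_eq_zero, hW, false_or, odeResidual, sub_eq_zero]
  exact ⟨fun h t => h 0 t, fun h _ t => h t⟩
end

section
/- For every c ∈ (0,1) there exist a twice continuously differentiable nonconstant function r : ℝ → ℝ with 0 < r(t) < 1 for all t, and a number T > 0 with r(t + T) = r(t) for all t ∈ ℝ, such that r satisfies (1 − r(t)²)·r(t)·r''(t) = (1 − 2 r(t)²)·(2 r'(t)² + r(t)²(1 − r(t)²)) for all t ∈ ℝ and r'(t)²/(r(t)⁴(1 − r(t)²)²) + 1/(r(t)²(1 − r(t)²)) = 4/c² for all t ∈ ℝ. -/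
/-!
Put `a = √(1 - c²)` and look for `r = √((1 + a sin φ) / 2)` with a new angle variable `φ(t)`.
For `u = r²` the conservation law reads `u'² = 4u²(1 - u)(4u(1 - u) - c²)/c²`, and
`4u(1 - u) - c² = a² cos² φ`; so it holds once `φ' = (4/c) u √(1 - u)`. This speed is positive
and `2π`-periodic in `φ`, so inverting `t(φ) = ∫₀^φ dψ / speed(ψ)` gives a surjective `φ` with
`φ(t + T) = φ(t) + 2π`, hence a periodic `r` oscillating between `√((1 ± a)/2)`. The ODE is then
an algebraic identity in `sin φ`, `cos φ`, `r` and `√(1 - r²)`.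
-/

open Real Function Filter

theorem Function.Periodic.exists_surjective_solution {g : ℝ → ℝ} {p : ℝ}
    (hg : Periodic g p) (hp : 0 < p) (hg_cont : Continuous g) (hg_pos : ∀ x, 0 < g x) :
    ∃ (φ : ℝ → ℝ) (T : ℝ), 0 < T ∧ Surjective φ ∧
      (∀ t, HasDerivAt φ (g (φ t)) t) ∧ ∀ t, φ (t + T) = φ t + p := by
  set τ : ℝ → ℝ := fun y => ∫ x in (0 : ℝ)..y, (g x)⁻¹
  have hinv_cont : Continuous fun x => (g x)⁻¹ := hg_cont.inv₀ fun x => (hg_pos x).ne'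
  have hinv_per : Periodic (fun x => (g x)⁻¹) p := fun x => by simp only [hg x]
  have hinv_pos : ∀ x, 0 < (g x)⁻¹ := fun x => inv_pos.2 (hg_pos x)
  have hinv_int := hinv_cont.intervalIntegrable (μ := MeasureTheory.volume)
  have hτ' : ∀ y, HasDerivAt τ (g y)⁻¹ y := fun y =>
    (hinv_cont.integral_hasStrictDerivAt 0 y).hasDerivAt
  have hτ_mono : StrictMono τ :=
    strictMono_of_deriv_pos fun y => (hτ' y).deriv ▸ hinv_pos y
  have hτ_surj : Surjective τ :=
    (continuous_iff_continuousAt.2 fun y => (hτ' y).continuousAt).surjective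
      (hinv_per.tendsto_atTop_intervalIntegral_of_pos' (hinv_int 0 p) hinv_pos hp)
      (hinv_per.tendsto_atBot_intervalIntegral_of_pos' (hinv_int 0 p) hinv_pos hp)
  have hτ_add : ∀ y, τ (y + p) = τ y + τ p := fun y => by
    simpa using hinv_per.intervalIntegral_add_eq_add 0 y hinv_int
  let e := StrictMono.orderIsoOfSurjective τ hτ_mono hτ_surj
  have hτe : ∀ t, τ (e.symm t) = t := e.apply_symm_apply
  refine ⟨e.symm, τ p, ?_, e.symm.surjective, fun t => ?_, fun t => ?_⟩
  · simpa [τ] using hτ_mono hp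
  · simpa using HasDerivAt.of_local_left_inverse e.symm.continuous.continuousAt (hτ' _)
      (inv_ne_zero (hg_pos _).ne') (Eventually.of_forall hτe)
  · exact hτ_mono.injective (by rw [hτ_add, hτe, hτe])

theorem contDiff_two_of_hasDerivAt {𝕜 F : Type*} [NontriviallyNormedField 𝕜]
    [NormedAddCommGroup F] [NormedSpace 𝕜 F] {f f' f'' : 𝕜 → F}
    (hf : ∀ t, HasDerivAt f (f' t) t) (hf' : ∀ t, HasDerivAt f' (f'' t) t)
    (hf'' : Continuous f'') : ContDiff 𝕜 2 f := by
  have hd : deriv f = f' := funext fun t => (hf t).deriv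
  have hd' : deriv f' = f'' := funext fun t => (hf' t).deriv
  refine (contDiff_succ_iff_deriv (n := 1)).2 ⟨fun t => (hf t).differentiableAt, by simp, ?_⟩
  rw [hd]
  exact contDiff_one_iff_deriv.2 ⟨fun t => (hf' t).differentiableAt, hd' ▸ hf''⟩

noncomputable section

namespace RotationalMinimalTorus

variable {a c : ℝ}

def profile (a x : ℝ) : ℝ := √((1 + a * sin x) / 2)

def angularSpeed (c a x : ℝ) : ℝ := 4 / c * profile a x ^ 2 * profile (-a) x

/-- `r'` and `r''` for `r = profile a ∘ φ`, written as functions of `φ`;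
note `profile (-a) = √(1 - (profile a)²)`. -/
def radialVelocity (c a x : ℝ) : ℝ := a / c * cos x * (profile a x * profile (-a) x)

def radialAcceleration (c a x : ℝ) : ℝ :=
  -(a * sin x * profile a x / c ^ 2) * (1 - a ^ 2 * sin x ^ 2 + a ^ 2 * cos x ^ 2)

lemma one_add_mul_sin_pos (ha : |a| < 1) (x : ℝ) : 0 < 1 + a * sin x := by
  have h : |a * sin x| ≤ |a| := by
    rw [abs_mul]; exact mul_le_of_le_one_right (abs_nonneg a) (abs_sin_le_one x)
  linarith [neg_abs_le (a * sin x)]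

lemma profile_pos (ha : |a| < 1) (x : ℝ) : 0 < profile a x :=
  sqrt_pos.2 (by linarith [one_add_mul_sin_pos ha x])

lemma profile_sq (ha : |a| < 1) (x : ℝ) : profile a x ^ 2 = (1 + a * sin x) / 2 :=
  sq_sqrt (by linarith [one_add_mul_sin_pos ha x])

lemma one_sub_profile_sq (ha : |a| < 1) (x : ℝ) : 1 - profile a x ^ 2 = profile (-a) x ^ 2 := by
  rw [profile_sq ha, profile_sq (by rwa [abs_neg])]; ring

lemma profile_lt_one (ha : |a| < 1) (x : ℝ) : profile a x < 1 := by
  have := profile_pos (a := -a) (by rwa [abs_neg]) x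
  nlinarith [one_sub_profile_sq ha x, profile_pos ha x]

lemma profile_periodic (a : ℝ) : Periodic (profile a) (2 * π) := fun x => by
  simp only [profile, sin_add_two_pi]

lemma profile_pi_div_two_ne (ha : |a| < 1) (ha0 : a ≠ 0) :
    profile a (π / 2) ≠ profile a (-(π / 2)) := by
  intro h
  have := congrArg (· ^ 2) h
  simp only [profile_sq ha, sin_neg, sin_pi_div_two] at this
  exact ha0 (by linarith)

lemma hasDerivAt_profile (ha : |a| < 1) (x : ℝ) :
    HasDerivAt (profile a) (a * cos x / (4 * profile a x)) x := by
  have h : HasDerivAt (profile a) (a * cos x / 2 / (2 * profile a x)) x :=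
    (((hasDerivAt_sin x).const_mul a).const_add 1).div_const 2 |>.sqrt
      (by linarith [one_add_mul_sin_pos ha x])
  convert h using 1
  ring

lemma continuous_angularSpeed (c a : ℝ) : Continuous (angularSpeed c a) := by
  unfold angularSpeed profile; fun_prop

lemma continuous_radialAcceleration (c a : ℝ) : Continuous (radialAcceleration c a) := by
  unfold radialAcceleration profile; fun_prop

lemma angularSpeed_pos (hc : 0 < c) (ha : |a| < 1) (x : ℝ) : 0 < angularSpeed c a x := by
  have := profile_pos ha x
  have := profile_pos (a := -a) (by rwa [abs_neg]) x
  unfold angularSpeed; positivity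

lemma angularSpeed_periodic (c a : ℝ) : Periodic (angularSpeed c a) (2 * π) := fun x => by
  simp only [angularSpeed, profile_periodic a x, profile_periodic (-a) x]

lemma radialVelocity_conserved (hc : c ≠ 0) (ha : |a| < 1) (hac : a ^ 2 + c ^ 2 = 1) (x : ℝ) :
    radialVelocity c a x ^ 2 / (profile a x ^ 4 * (1 - profile a x ^ 2) ^ 2) +
      1 / (profile a x ^ 2 * (1 - profile a x ^ 2)) = 4 / c ^ 2 := by
  have ha' : |-a| < 1 := by rwa [abs_neg]
  have := (profile_pos ha x).ne'
  have := (profile_pos ha' x).ne'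
  rw [one_sub_profile_sq ha]
  unfold radialVelocity
  field_simp
  rw [profile_sq ha, profile_sq ha']
  linear_combination hac + a ^ 2 * sin_sq_add_cos_sq x

lemma radialAcceleration_ode (hc : c ≠ 0) (ha : |a| < 1) (hac : a ^ 2 + c ^ 2 = 1) (x : ℝ) :
    (1 - profile a x ^ 2) * profile a x * radialAcceleration c a x =
      (1 - 2 * profile a x ^ 2) *
        (2 * radialVelocity c a x ^ 2 + profile a x ^ 2 * (1 - profile a x ^ 2)) := by
  have ha' : |-a| < 1 := by rwa [abs_neg]
  rw [one_sub_profile_sq ha]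
  unfold radialVelocity radialAcceleration
  field_simp
  rw [profile_sq ha, profile_sq ha']
  linear_combination a * sin x / 4 *
    ((1 - a ^ 2 * sin x ^ 2) * hac + a ^ 2 * (1 - a ^ 2 * sin x ^ 2) * sin_sq_add_cos_sq x)

section Flow

variable {φ : ℝ → ℝ} (hφ : ∀ t, HasDerivAt φ (angularSpeed c a (φ t)) t)
include hφ

lemma hasDerivAt_profile_comp (ha : |a| < 1) (t : ℝ) :
    HasDerivAt (profile a ∘ φ) (radialVelocity c a (φ t)) t := by
  have := (profile_pos ha (φ t)).ne'
  refine ((hasDerivAt_profile ha (φ t)).comp t (hφ t)).congr_deriv ?_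
  unfold angularSpeed radialVelocity
  field_simp

lemma hasDerivAt_radialVelocity_comp (ha : |a| < 1) (t : ℝ) :
    HasDerivAt (radialVelocity c a ∘ φ) (radialAcceleration c a (φ t)) t := by
  have ha' : |-a| < 1 := by rwa [abs_neg]
  have := (profile_pos ha (φ t)).ne'
  have := (profile_pos ha' (φ t)).ne'
  have hv : HasDerivAt (radialVelocity c a) _ (φ t) :=
    ((hasDerivAt_cos _).const_mul (a / c)).mul
      ((hasDerivAt_profile ha _).mul (hasDerivAt_profile ha' _))
  refine (hv.comp t (hφ t)).congr_deriv ?_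
  unfold angularSpeed radialAcceleration
  field_simp
  rw [profile_sq ha, profile_sq ha']
  ring

end Flow

end RotationalMinimalTorus

end

open RotationalMinimalTorus

/-- For every `c ∈ (0,1)` there is a nonconstant periodic solution of the
minimal-surface ODE whose conserved quantity equals `4/c²`. -/
theorem exists_periodic_nonconstant_solution :
    ∀ c ∈ Set.Ioo (0 : ℝ) 1, ∃ (r : ℝ → ℝ) (T : ℝ),
      ContDiff ℝ 2 r ∧
      (¬ ∀ t₁ t₂ : ℝ, r t₁ = r t₂) ∧
      (∀ t : ℝ, 0 < r t ∧ r t < 1) ∧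
      0 < T ∧
      (∀ t : ℝ, r (t + T) = r t) ∧
      (∀ t : ℝ, (1 - r t ^ 2) * r t * deriv (deriv r) t
        = (1 - 2 * r t ^ 2) * (2 * (deriv r t) ^ 2 + r t ^ 2 * (1 - r t ^ 2))) ∧
      (∀ t : ℝ,
        (deriv r t) ^ 2 / (r t ^ 4 * (1 - r t ^ 2) ^ 2) + 1 / (r t ^ 2 * (1 - r t ^ 2))
          = 4 / c ^ 2) := by
  rintro c ⟨hc0, hc1⟩
  set a := √(1 - c ^ 2)
  have hac : a ^ 2 + c ^ 2 = 1 := by rw [sq_sqrt (by nlinarith)]; ring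
  have ha0 : 0 < a := sqrt_pos.2 (by nlinarith)
  have ha : |a| < 1 := by rw [abs_of_pos ha0]; nlinarith
  obtain ⟨φ, T, hT, hφ_surj, hφ, hφ_add⟩ :=
    (angularSpeed_periodic c a).exists_surjective_solution two_pi_pos
      (continuous_angularSpeed c a) (angularSpeed_pos hc0 ha)
  have hr := hasDerivAt_profile_comp hφ ha
  have hv := hasDerivAt_radialVelocity_comp hφ ha
  have hr' : deriv (profile a ∘ φ) = radialVelocity c a ∘ φ := funext fun t => (hr t).deriv
  have hr'' : deriv (deriv (profile a ∘ φ)) = radialAcceleration c a ∘ φ := by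
    rw [hr']; exact funext fun t => (hv t).deriv
  have hφ_cont : Continuous φ := continuous_iff_continuousAt.2 fun t => (hφ t).continuousAt
  refine ⟨profile a ∘ φ, T,
    contDiff_two_of_hasDerivAt hr hv ((continuous_radialAcceleration c a).comp hφ_cont),
    fun h => ?_, fun t => ⟨profile_pos ha _, profile_lt_one ha _⟩, hT, fun t => ?_, fun t => ?_,
    fun t => ?_⟩
  · obtain ⟨t₁, h₁⟩ := hφ_surj (π / 2)
    obtain ⟨t₂, h₂⟩ := hφ_surj (-(π / 2))
    exact profile_pi_div_two_ne ha ha0.ne' (by simpa [h₁, h₂] using h t₁ t₂)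
  · simp only [comp_apply, hφ_add, profile_periodic a (φ t)]
  · rw [hr'', hr']; exact radialAcceleration_ode hc0.ne' ha hac (φ t)
  · rw [hr']; exact radialVelocity_conserved hc0.ne' ha hac (φ t)
end

section
/- For c ∈ (0,1) set x̲(c) = √((1 − √(1 − c²))/2), x̄(c) = √((1 + √(1 − c²))/2), and T(c) = 2·∫_{x̲(c)}^{x̄(c)} c/( x·√(1 − x²)·√(4x²(1 − x²) − c²) ) dx. Then for every c ∈ (0,1) the function x ↦ c/( x·√(1 − x²)·√(4x²(1 − x²) − c²) ) is integrable on the open interval (x̲(c), x̄(c)), and T(c) tends to √2·π as c tends to 1 from the left. -/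
/-!
Write `k = √(1 - c²)`, so that `4x²(1 - x²) - c² = k² - (2x² - 1)²` and `x̲², x̄² = (1 ∓ k)/2`.
Then `x / √(4x²(1 - x²) - c²)` has the primitive `arcsin ((2x² - 1)/k) / 4`, which runs from
`-π/8` to `π/8`, so its integral over `(x̲, x̄)` is `π/4` for every `c`. The period integrand is
this function times the weight `c / (x²√(1 - x²))`, and on `(x̲, x̄)` both `x²` and `1 - x²` lie
in `(x̲², x̄²)`; hence `T(c)` lies between `(π/2)·c/x̄³` and `(π/2)·c/x̲³`. As `c → 1⁻` both
`x̲²` and `x̄²` tend to `1/2`, and both bounds tend to `(π/2)·2√2 = √2·π`.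
-/

open MeasureTheory Real Set Filter Topology

theorem integrableOn_and_setIntegral_mem_Icc_of_forall_mem_Icc {α : Type*} [MeasurableSpace α]
    {μ : Measure α} {s : Set α} {f g : α → ℝ} {m M : ℝ} (hs : MeasurableSet s)
    (hf : AEStronglyMeasurable f (μ.restrict s)) (hg : IntegrableOn g s μ)
    (hfg : ∀ x ∈ s, f x ∈ Icc (m * g x) (M * g x)) :
    IntegrableOn f s μ ∧ ∫ x in s, f x ∂μ ∈ Icc (m * ∫ x in s, g x ∂μ) (M * ∫ x in s, g x ∂μ) := by
  have hfg' : ∀ᵐ x ∂μ.restrict s, f x ∈ Icc (m * g x) (M * g x) :=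
    (ae_restrict_iff' hs).2 (ae_of_all _ hfg)
  have hf_int : IntegrableOn f s μ :=
    integrable_of_le_of_le hf (hfg'.mono fun _ hx => hx.1) (hfg'.mono fun _ hx => hx.2)
      (hg.const_mul m) (hg.const_mul M)
  refine ⟨hf_int, ?_, ?_⟩
  · rw [← integral_const_mul]
    exact integral_mono_ae (hg.const_mul m) hf_int (hfg'.mono fun _ hx => hx.1)
  · rw [← integral_const_mul]
    exact integral_mono_ae hf_int (hg.const_mul M) (hfg'.mono fun _ hx => hx.2)

lemma pos_and_sq_mem_Ioo_of_mem_Ioo_sqrt {a b x : ℝ} (hx : x ∈ Ioo (√a) (√b)) :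
    0 < x ∧ x ^ 2 ∈ Ioo a b := by
  have hx0 : 0 < x := (sqrt_nonneg a).trans_lt hx.1
  exact ⟨hx0, (sqrt_lt' hx0).1 hx.1, (lt_sqrt hx0.le).1 hx.2⟩

lemma hasDerivAt_arcsin_two_mul_sq_sub_one_div {k x : ℝ} (hk : 0 < k)
    (hx : (2 * x ^ 2 - 1) ^ 2 < k ^ 2) :
    HasDerivAt (fun y => arcsin ((2 * y ^ 2 - 1) / k))
      (4 * x / √(k ^ 2 - (2 * x ^ 2 - 1) ^ 2)) x := by
  have hu : |(2 * x ^ 2 - 1) / k| < 1 := by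
    rw [abs_div, abs_of_pos hk, div_lt_one hk]
    simpa [abs_of_pos hk] using sq_lt_sq.1 hx
  have hinner : HasDerivAt (fun y => (2 * y ^ 2 - 1) / k) (4 * x / k) x := by
    refine ((((hasDerivAt_pow 2 x).const_mul 2).sub_const 1).div_const k).congr_deriv ?_
    ring
  refine ((hasDerivAt_arcsin (abs_lt.1 hu).1.ne' (abs_lt.1 hu).2.ne).comp x hinner).congr_deriv ?_
  have hpos : 0 < k ^ 2 - (2 * x ^ 2 - 1) ^ 2 := sub_pos.2 hx
  rw [show 1 - ((2 * x ^ 2 - 1) / k) ^ 2 = (k ^ 2 - (2 * x ^ 2 - 1) ^ 2) / k ^ 2 by field_simp,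
    sqrt_div hpos.le, sqrt_sq hk.le]
  field_simp

lemma integrableOn_and_integral_Ioo_div_sqrt {k : ℝ} (hk0 : 0 < k) (hk1 : k ≤ 1) :
    IntegrableOn (fun x => x / √(k ^ 2 - (2 * x ^ 2 - 1) ^ 2))
        (Ioo (√((1 - k) / 2)) (√((1 + k) / 2))) ∧
      ∫ x in Ioo (√((1 - k) / 2)) (√((1 + k) / 2)), x / √(k ^ 2 - (2 * x ^ 2 - 1) ^ 2) =
        π / 4 := by
  set a := √((1 - k) / 2)
  set b := √((1 + k) / 2)
  have hab : a ≤ b := sqrt_le_sqrt (by linarith)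
  set F : ℝ → ℝ := fun y => arcsin ((2 * y ^ 2 - 1) / k) / 4
  have hF : ∀ x ∈ Ioo a b, HasDerivAt F (x / √(k ^ 2 - (2 * x ^ 2 - 1) ^ 2)) x := by
    intro x hx
    obtain ⟨-, hxa, hxb⟩ := pos_and_sq_mem_Ioo_of_mem_Ioo_sqrt hx
    have hxk : (2 * x ^ 2 - 1) ^ 2 < k ^ 2 := sq_lt_sq' (by linarith) (by linarith)
    exact ((hasDerivAt_arcsin_two_mul_sq_sub_one_div hk0 hxk).div_const 4).congr_deriv (by ring)
  have hFcont : ContinuousOn F (Icc a b) := by fun_prop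
  have hIoc := intervalIntegral.integrableOn_deriv_of_nonneg hFcont hF fun x hx =>
    div_nonneg (pos_and_sq_mem_Ioo_of_mem_Ioo_sqrt hx).1.le (sqrt_nonneg _)
  refine ⟨hIoc.mono_set Ioo_subset_Ioc_self, ?_⟩
  have hFTC := intervalIntegral.integral_eq_sub_of_hasDerivAt_of_le hab hFcont hF
    ((intervalIntegrable_iff_integrableOn_Ioc_of_le hab).2 hIoc)
  rw [intervalIntegral.integral_of_le hab, integral_Ioc_eq_integral_Ioo] at hFTC
  have hFb : F b = π / 2 / 4 := by
    simp only [F, b, sq_sqrt (by linarith : 0 ≤ (1 + k) / 2)]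
    rw [show (2 * ((1 + k) / 2) - 1) / k = 1 by field_simp; ring, arcsin_one]
  have hFa : F a = -(π / 2) / 4 := by
    simp only [F, a, sq_sqrt (by linarith : 0 ≤ (1 - k) / 2)]
    rw [show (2 * ((1 - k) / 2) - 1) / k = -1 by field_simp; ring, arcsin_neg_one]
  rw [hFTC, hFb, hFa]
  ring

noncomputable def periodIntegrand (c x : ℝ) : ℝ :=
  c / (x * √(1 - x ^ 2) * √(4 * x ^ 2 * (1 - x ^ 2) - c ^ 2))

theorem integrableOn_periodIntegrand_and_integral_mem_Icc {c k : ℝ} (hc : 0 < c) (hk : 0 < k)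
    (hck : c ^ 2 + k ^ 2 = 1) :
    IntegrableOn (periodIntegrand c) (Ioo (√((1 - k) / 2)) (√((1 + k) / 2))) ∧
      ∫ x in Ioo (√((1 - k) / 2)) (√((1 + k) / 2)), periodIntegrand c x ∈
        Icc (c / ((1 + k) / 2 * √((1 + k) / 2)) * (π / 4))
          (c / ((1 - k) / 2 * √((1 - k) / 2)) * (π / 4)) := by
  have hk1 : k < 1 := by nlinarith
  obtain ⟨hg, hgI⟩ := integrableOn_and_integral_Ioo_div_sqrt hk hk1.le
  have hmeas : Measurable (periodIntegrand c) := by unfold periodIntegrand; fun_prop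
  rw [← hgI]
  refine integrableOn_and_setIntegral_mem_Icc_of_forall_mem_Icc measurableSet_Ioo
    hmeas.aestronglyMeasurable hg fun x hx => ?_
  obtain ⟨hx0, hxa, hxb⟩ := pos_and_sq_mem_Ioo_of_mem_Ioo_sqrt hx
  have hx1 : 0 < √(1 - x ^ 2) := sqrt_pos.2 (by linarith)
  have hrepr : periodIntegrand c x =
      c / (x ^ 2 * √(1 - x ^ 2)) * (x / √(k ^ 2 - (2 * x ^ 2 - 1) ^ 2)) := by
    rw [periodIntegrand, show 4 * x ^ 2 * (1 - x ^ 2) - c ^ 2 = k ^ 2 - (2 * x ^ 2 - 1) ^ 2 by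
      linear_combination -hck]
    field_simp
  have hg0 : 0 ≤ x / √(k ^ 2 - (2 * x ^ 2 - 1) ^ 2) := by positivity
  rw [hrepr]
  constructor <;> gcongr <;> linarith

lemma tendsto_div_mul_sqrt {s : ℝ → ℝ} (hs : ContinuousAt s 1) (hs1 : s 1 = 1 / 2) :
    Tendsto (fun c => c / (s c * √(s c))) (𝓝 1) (𝓝 (2 * √2)) := by
  have hden : s 1 * √(s 1) ≠ 0 := by rw [hs1]; positivity
  have hcont : ContinuousAt (fun c => c / (s c * √(s c))) 1 := by fun_prop (disch := exact hden)
  convert hcont.tendsto using 2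
  rw [hs1, one_div (2 : ℝ), sqrt_inv]
  field_simp

/-- The period integrand is integrable on `(x̲(c), x̄(c))` for every `c ∈ (0,1)`, and
the period `T(c)` tends to `√2·π` as `c → 1⁻`. -/
theorem period_integrable_and_tendsto :
    (∀ c ∈ Set.Ioo (0 : ℝ) 1,
      IntegrableOn
        (fun x : ℝ => c / (x * Real.sqrt (1 - x ^ 2)
          * Real.sqrt (4 * x ^ 2 * (1 - x ^ 2) - c ^ 2)))
        (Set.Ioo (Real.sqrt ((1 - Real.sqrt (1 - c ^ 2)) / 2))
          (Real.sqrt ((1 + Real.sqrt (1 - c ^ 2)) / 2)))) ∧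
    Filter.Tendsto
      (fun c : ℝ => 2 * ∫ x in Set.Ioo (Real.sqrt ((1 - Real.sqrt (1 - c ^ 2)) / 2))
          (Real.sqrt ((1 + Real.sqrt (1 - c ^ 2)) / 2)),
        c / (x * Real.sqrt (1 - x ^ 2) * Real.sqrt (4 * x ^ 2 * (1 - x ^ 2) - c ^ 2)))
      (nhdsWithin 1 (Set.Iio 1)) (nhds (Real.sqrt 2 * Real.pi)) := by
  have hbounds (c : ℝ) (hc : c ∈ Ioo (0 : ℝ) 1) :=
    integrableOn_periodIntegrand_and_integral_mem_Icc (k := √(1 - c ^ 2)) hc.1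
      (sqrt_pos.2 (by nlinarith [hc.1, hc.2])) (by rw [sq_sqrt (by nlinarith [hc.1, hc.2])]; ring)
  refine ⟨fun c hc => (hbounds c hc).1, ?_⟩
  have hlim {s : ℝ → ℝ} (hs : ContinuousAt s 1) (hs1 : s 1 = 1 / 2) :
      Tendsto (fun c => 2 * (c / (s c * √(s c)) * (π / 4))) (𝓝[<] 1) (𝓝 (√2 * π)) := by
    convert (((tendsto_div_mul_sqrt hs hs1).mul_const (π / 4)).const_mul 2).mono_left
      nhdsWithin_le_nhds using 2
    ring
  refine tendsto_of_tendsto_of_tendsto_of_le_of_le'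
    (hlim (s := fun c => (1 + √(1 - c ^ 2)) / 2) (by fun_prop) (by norm_num))
    (hlim (s := fun c => (1 - √(1 - c ^ 2)) / 2) (by fun_prop) (by norm_num)) ?_ ?_
  all_goals filter_upwards [Ioo_mem_nhdsLT one_pos] with c hc
  · exact mul_le_mul_of_nonneg_left (hbounds c hc).2.1 zero_le_two
  · exact mul_le_mul_of_nonneg_left (hbounds c hc).2.2 zero_le_two
end

section
/- Let a, x, v ∈ ℝ⁴ with ‖a‖ < 1, ‖x‖ = 1, and ⟨x, v⟩ = 0, and define ψ_a(y) = a + ((1 − ‖a‖²)/(1 + 2⟨a,y⟩ + ‖a‖²))·(y + a). Then ψ_a is differentiable at x and the Fréchet derivative of ψ_a at x satisfies ‖(Dψ_a)(x)·v‖ = ((1 − ‖a‖²)/(1 + 2⟨a,x⟩ + ‖a‖²))·‖v‖. In other words, ψ_a restricted to the unit sphere is conformal with conformal factor (1 − ‖a‖²)/(1 + 2⟨a,x⟩ + ‖a‖²) at x. -/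
/-!
On the unit sphere the denominator `1 + 2⟪a, x⟫ + ‖a‖²` is `‖x + a‖²`. Differentiating the scalar
factor `λ` along a tangent vector `v` gives `-2λ⟪x + a, v⟫ / ‖x + a‖²`, so the differential of `ψ_a`
sends `v` to `λ (v - 2 (⟪x + a, v⟫ / ‖x + a‖²) (x + a))`: `λ` times the reflection of `v` in the
hyperplane `(x + a)ᗮ`, an isometry.
-/

open scoped RealInnerProductSpace

noncomputable section

theorem norm_add_pos_of_norm_lt {E : Type*} [SeminormedAddCommGroup E] {a x : E}
    (h : ‖a‖ < ‖x‖) : 0 < ‖x + a‖ := by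
  have := norm_sub_norm_le x (-a)
  rw [norm_neg, sub_neg_eq_add] at this
  linarith

variable {E : Type*} [NormedAddCommGroup E] [InnerProductSpace ℝ E]

def sphereConformalFactor (a y : E) : ℝ :=
  (1 - ‖a‖ ^ 2) / (1 + 2 * ⟪a, y⟫ + ‖a‖ ^ 2)

def sphereConformalMap (a y : E) : E :=
  a + sphereConformalFactor a y • (y + a)

theorem one_add_two_inner_add_sq_norm_eq (a : E) {x : E} (hx : ‖x‖ = 1) :
    1 + 2 * ⟪a, x⟫ + ‖a‖ ^ 2 = ‖x + a‖ ^ 2 := by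
  rw [norm_add_sq_real, hx, real_inner_comm]
  ring

theorem one_add_two_inner_add_sq_norm_pos {a x : E} (ha : ‖a‖ < 1) (hx : ‖x‖ = 1) :
    0 < 1 + 2 * ⟪a, x⟫ + ‖a‖ ^ 2 := by
  rw [one_add_two_inner_add_sq_norm_eq a hx]
  exact pow_pos (norm_add_pos_of_norm_lt (hx ▸ ha)) 2

theorem sphereConformalFactor_pos {a x : E} (ha : ‖a‖ < 1) (hx : ‖x‖ = 1) :
    0 < sphereConformalFactor a x := by
  have hc : 0 < 1 - ‖a‖ ^ 2 := by nlinarith [norm_nonneg a]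
  exact div_pos hc (one_add_two_inner_add_sq_norm_pos ha hx)

theorem hasFDerivAt_sphereConformalFactor {a x : E} (hd : 1 + 2 * ⟪a, x⟫ + ‖a‖ ^ 2 ≠ 0) :
    HasFDerivAt (sphereConformalFactor a)
      ((-(2 * sphereConformalFactor a x / (1 + 2 * ⟪a, x⟫ + ‖a‖ ^ 2))) • innerSL ℝ a) x := by
  have hden : HasFDerivAt (fun y : E ↦ 1 + 2 * ⟪a, y⟫ + ‖a‖ ^ 2) ((2 : ℝ) • innerSL ℝ a) x := by
    simpa using (((innerSL ℝ a).hasFDerivAt.const_mul (2 : ℝ)).const_add 1).add_const (‖a‖ ^ 2)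
  have hfun : sphereConformalFactor a =
      (fun t ↦ (1 - ‖a‖ ^ 2) * t⁻¹) ∘ fun y : E ↦ 1 + 2 * ⟪a, y⟫ + ‖a‖ ^ 2 := by
    funext y
    simp only [sphereConformalFactor, Function.comp_apply, div_eq_mul_inv]
  rw [hfun]
  refine (((hasDerivAt_inv hd).const_mul _).comp_hasFDerivAt x hden).congr_fderiv ?_
  rw [smul_smul, Function.comp_apply]
  congr 1
  field_simp

theorem hasFDerivAt_sphereConformalMap {a x : E} (hd : 1 + 2 * ⟪a, x⟫ + ‖a‖ ^ 2 ≠ 0) :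
    HasFDerivAt (sphereConformalMap a)
      (sphereConformalFactor a x • ContinuousLinearMap.id ℝ E +
        ((-(2 * sphereConformalFactor a x / (1 + 2 * ⟪a, x⟫ + ‖a‖ ^ 2))) •
          innerSL ℝ a).smulRight (x + a)) x :=
  ((hasFDerivAt_sphereConformalFactor hd).smul ((hasFDerivAt_id x).add_const a)).const_add a

theorem fderiv_sphereConformalMap_apply_of_inner_eq_zero {a x v : E} (ha : ‖a‖ < 1)
    (hx : ‖x‖ = 1) (hv : ⟪x, v⟫ = 0) :
    fderiv ℝ (sphereConformalMap a) x v =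
      -(sphereConformalFactor a x • (ℝ ∙ (x + a)).reflection v) := by
  have hxav : ⟪x + a, v⟫ = ⟪a, v⟫ := by rw [inner_add_left, hv, zero_add]
  rw [(hasFDerivAt_sphereConformalMap (one_add_two_inner_add_sq_norm_pos ha hx).ne').fderiv,
    one_add_two_inner_add_sq_norm_eq a hx, Submodule.reflection_singleton_apply, hxav]
  simp only [add_apply, smul_apply, ContinuousLinearMap.id_apply,
    ContinuousLinearMap.smulRight_apply, innerSL_apply_apply]
  module

end

/-- The conformal transformation `ψ_a` of `S³` is conformal at `x ∈ S³` with conformal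
factor `(1 − ‖a‖²)/(1 + 2⟨a,x⟩ + ‖a‖²)` on tangent vectors `v ⊥ x`. -/
theorem conformal_factor_of_sphere_transformation
    (a x v : EuclideanSpace ℝ (Fin 4)) (ha : ‖a‖ < 1) (hx : ‖x‖ = 1)
    (hv : ⟪x, v⟫ = 0)
    (ψ : EuclideanSpace ℝ (Fin 4) → EuclideanSpace ℝ (Fin 4))
    (hψ : ∀ y : EuclideanSpace ℝ (Fin 4),
      ψ y = a + ((1 - ‖a‖ ^ 2) / (1 + 2 * ⟪a, y⟫ + ‖a‖ ^ 2)) • (y + a)) :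
    DifferentiableAt ℝ ψ x ∧
    ‖fderiv ℝ ψ x v‖ = ((1 - ‖a‖ ^ 2) / (1 + 2 * ⟪a, x⟫ + ‖a‖ ^ 2)) * ‖v‖ := by
  obtain rfl : ψ = sphereConformalMap a := funext hψ
  refine ⟨(hasFDerivAt_sphereConformalMap
    (one_add_two_inner_add_sq_norm_pos ha hx).ne').differentiableAt, ?_⟩
  rw [fderiv_sphereConformalMap_apply_of_inner_eq_zero ha hx hv, norm_neg, norm_smul,
    LinearIsometryEquiv.norm_map, Real.norm_of_nonneg (sphereConformalFactor_pos ha hx).le]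
  rfl
end

section
/- Let μ be a finite Borel measure on ℝ⁴ with μ ≠ 0, such that μ is supported on the unit sphere S³ = {x ∈ ℝ⁴ : ‖x‖ = 1} (that is, μ(ℝ⁴ \ S³) = 0) and μ has no atoms (μ({x}) = 0 for every x ∈ ℝ⁴). Then there exists a ∈ ℝ⁴ with ‖a‖ < 1 such that the vector-valued integral ∫ ψ_a(x) dμ(x) equals 0 ∈ ℝ⁴, where ψ_a(y) = a + ((1 − ‖a‖²)/(1 + 2⟨a,y⟩ + ‖a‖²))·(y + a). -/
/-!
On the unit sphere `ψ_a` is conformal with factor `(1 - ‖a‖²) / ‖x + a‖²`. Half the `μ`-integral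
of the logarithm of this factor, `conformalEnergy μ a`, is differentiable on the open unit ball
with gradient `-(1 - ‖a‖²)⁻¹ • ∫ ψ_a dμ`, so an interior maximum of it is a balancing point.
It vanishes at `0`. Since `μ` has no atoms and is carried by a compact set, for some `r > 0` no
ball of radius `r` has more than a quarter of the total mass `M`; bounding `‖x + a‖` below by
`1 - ‖a‖` on the ball of radius `r` around `-a` and by `r` off it gives
`conformalEnergy μ a ≤ M/4 · log (1 - ‖a‖) + C`, which tends to `-∞` as `‖a‖ → 1`.
-/

open MeasureTheory Metric Filter Real Set
open scoped RealInnerProductSpace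

section NormedGroup

variable {E : Type*} [SeminormedAddCommGroup E]

lemma one_sub_norm_le_norm_add {x : E} (hx : ‖x‖ = 1) (a : E) : 1 - ‖a‖ ≤ ‖x + a‖ := by
  simpa [hx] using norm_sub_norm_le x (-a)

lemma norm_add_le_two {x a : E} (hx : ‖x‖ = 1) (ha : ‖a‖ ≤ 1) : ‖x + a‖ ≤ 2 := by
  linarith [norm_add_le x a]

variable [MeasurableSpace E]

noncomputable def conformalEnergy (μ : Measure E) (a : E) : ℝ :=
  μ.real univ / 2 * log (1 - ‖a‖ ^ 2) - ∫ x, log ‖x + a‖ ∂μ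

lemma conformalEnergy_zero {μ : Measure E} (hs : ∀ᵐ x ∂μ, ‖x‖ = 1) : conformalEnergy μ 0 = 0 := by
  rw [conformalEnergy, integral_eq_zero_of_ae]
  · simp
  · filter_upwards [hs] with x hx
    simp [hx]

variable [OpensMeasurableSpace E] {μ : Measure E} [IsFiniteMeasure μ]

lemma integrable_log_norm_add (hs : ∀ᵐ x ∂μ, ‖x‖ = 1) {a : E} (ha : ‖a‖ < 1) :
    Integrable (fun x => log ‖x + a‖) μ := by
  have hmeas : Measurable fun x => log ‖x + a‖ :=
    measurable_log.comp (continuous_add_const a).norm.measurable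
  refine .of_bound hmeas.aestronglyMeasurable (|log (1 - ‖a‖)| + log 2) ?_
  filter_upwards [hs] with x hx
  have hpos : 0 < 1 - ‖a‖ := by linarith
  have hlower : log (1 - ‖a‖) ≤ log ‖x + a‖ :=
    log_le_log hpos (one_sub_norm_le_norm_add hx a)
  have hupper : log ‖x + a‖ ≤ log 2 :=
    log_le_log (hpos.trans_le (one_sub_norm_le_norm_add hx a)) (norm_add_le_two hx ha.le)
  rw [Real.norm_eq_abs, abs_le]
  constructor <;> linarith [neg_abs_le (log (1 - ‖a‖)), abs_nonneg (log (1 - ‖a‖)),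
    log_nonneg (one_le_two (α := ℝ))]

lemma le_integral_log_norm_add (hs : ∀ᵐ x ∂μ, ‖x‖ = 1) {r : ℝ} (hr : 0 < r)
    (hball : ∀ c, μ.real (ball c r) ≤ μ.real univ / 4) {a : E} (har : 1 - r ≤ ‖a‖)
    (ha : ‖a‖ < 1) :
    μ.real univ * log r + μ.real univ / 4 * (log (1 - ‖a‖) - log r) ≤
      ∫ x, log ‖x + a‖ ∂μ := by
  set B := ball (-a) r
  have hcoef : log (1 - ‖a‖) - log r ≤ 0 := by
    linarith [log_le_log (by linarith : 0 < 1 - ‖a‖) (by linarith : 1 - ‖a‖ ≤ r)]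
  have hlower : ∀ᵐ x ∂μ, log r + B.indicator (fun _ => log (1 - ‖a‖) - log r) x ≤
      log ‖x + a‖ := by
    filter_upwards [hs] with x hx
    by_cases hxB : x ∈ B
    · rw [indicator_of_mem hxB, add_sub_cancel]
      exact log_le_log (by linarith) (one_sub_norm_le_norm_add hx a)
    · rw [indicator_of_notMem hxB, add_zero]
      have : r ≤ ‖x + a‖ := by simpa [B, dist_eq_norm] using hxB
      exact log_le_log hr this
  have hint := integral_mono_ae ((integrable_const _).add
    ((integrable_const _).indicator measurableSet_ball)) (integrable_log_norm_add hs ha) hlower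
  rw [integral_add (integrable_const _) ((integrable_const _).indicator measurableSet_ball),
    integral_const, integral_indicator_const _ measurableSet_ball, smul_eq_mul, smul_eq_mul]
    at hint
  nlinarith [mul_le_mul_of_nonpos_right (hball (-a)) hcoef]

lemma exists_conformalEnergy_le (hs : ∀ᵐ x ∂μ, ‖x‖ = 1) {r : ℝ} (hr : 0 < r)
    (hball : ∀ c, μ.real (ball c r) ≤ μ.real univ / 4) :
    ∃ C, ∀ a : E, 1 - r ≤ ‖a‖ → ‖a‖ < 1 →
      conformalEnergy μ a ≤ μ.real univ / 4 * log (1 - ‖a‖) + C := by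
  refine ⟨μ.real univ / 2 * log 2 - 3 * μ.real univ / 4 * log r, fun a har ha => ?_⟩
  have hM : 0 ≤ μ.real univ := measureReal_nonneg
  have hsplit : log (1 - ‖a‖ ^ 2) ≤ log (1 - ‖a‖) + log 2 := by
    rw [← log_mul (by linarith) two_ne_zero]
    exact log_le_log (by nlinarith [norm_nonneg a]) (by nlinarith [norm_nonneg a])
  have := le_integral_log_norm_add hs hr hball har ha
  rw [conformalEnergy]
  nlinarith [mul_le_mul_of_nonneg_left hsplit (by positivity : 0 ≤ μ.real univ / 2)]

end NormedGroup

theorem exists_pos_forall_measure_ball_lt {α : Type*} [MetricSpace α] [MeasurableSpace α]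
    [OpensMeasurableSpace α] {μ : Measure α} [IsFiniteMeasure μ] [NullSingletonClass μ]
    {K : Set α} (hK : IsCompact K) (hμK : μ Kᶜ = 0) {ε : ENNReal} (hε : 0 < ε) :
    ∃ r > 0, ∀ c, μ (ball c r) < ε := by
  have hsmall : ∀ x : α, ∃ δ > 0, μ (ball x δ) < ε := fun x => by
    have h := tendsto_measure_thickening_of_isClosed (μ := μ) ⟨1, one_pos, measure_ne_top _ _⟩
      (isClosed_singleton (x := x))
    simp only [thickening_singleton, measure_singleton] at h
    exact ((h.eventually (gt_mem_nhds hε)).and self_mem_nhdsWithin).exists.imp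
      fun δ hδ => ⟨hδ.2, hδ.1⟩
  choose δ hδ hμδ using hsmall
  obtain ⟨η, hη, hleb⟩ := lebesgue_number_lemma_of_metric hK (fun x => isOpen_ball (x := x))
    (fun x _ => mem_iUnion.2 ⟨x, mem_ball_self (hδ x)⟩)
  refine ⟨η / 2, half_pos hη, fun c => ?_⟩
  by_cases hmeet : (ball c (η / 2) ∩ K).Nonempty
  · obtain ⟨y, hyc, hyK⟩ := hmeet
    obtain ⟨x, hx⟩ := hleb y hyK
    have hsub : ball c (η / 2) ⊆ ball y η :=
      ball_subset_ball' (by rw [dist_comm]; linarith [mem_ball.1 hyc])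
    exact (measure_mono (hsub.trans hx)).trans_lt (hμδ x)
  · rw [not_nonempty_iff_eq_empty, ← disjoint_iff_inter_eq_empty] at hmeet
    exact (measure_mono_null hmeet.subset_compl_right hμK).trans_lt hε

section InnerProductSpace

variable {E : Type*} [NormedAddCommGroup E] [InnerProductSpace ℝ E]

lemma one_add_two_inner_add_norm_sq {x : E} (hx : ‖x‖ = 1) (a : E) :
    1 + 2 * ⟪a, x⟫ + ‖a‖ ^ 2 = ‖x + a‖ ^ 2 := by
  rw [norm_add_sq_real, hx, real_inner_comm]
  ring

lemma norm_inv_norm_sq_smul (v : E) : ‖(‖v‖ ^ 2)⁻¹ • v‖ = ‖v‖⁻¹ := by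
  rcases eq_or_ne v 0 with rfl | hv
  · simp
  · rw [norm_smul, norm_inv, norm_pow, norm_norm]
    field_simp

lemma norm_inv_norm_sq_smul_add_le {x : E} (hx : ‖x‖ = 1) {a : E} (ha : ‖a‖ < 1) :
    ‖(‖x + a‖ ^ 2)⁻¹ • (x + a)‖ ≤ (1 - ‖a‖)⁻¹ := by
  rw [norm_inv_norm_sq_smul]
  exact inv_anti₀ (by linarith) (one_sub_norm_le_norm_add hx a)

lemma hasFDerivAt_log_norm_add (x : E) {a : E} (h : x + a ≠ 0) :
    HasFDerivAt (fun b => log ‖x + b‖) (innerSL ℝ ((‖x + a‖ ^ 2)⁻¹ • (x + a))) a := by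
  have hsq : HasFDerivAt (fun b => log (‖x + b‖ ^ 2))
      ((‖x + a‖ ^ 2)⁻¹ • (2 • (innerSL ℝ (x + a)).comp (ContinuousLinearMap.id ℝ E))) a :=
    (((hasFDerivAt_id a).const_add x).norm_sq).log (by positivity)
  have hlog : (fun b => log ‖x + b‖) = fun b => (1 / 2 : ℝ) * log (‖x + b‖ ^ 2) := by
    ext b
    rw [Real.log_pow]
    ring
  rw [hlog]
  refine (hsq.const_mul (1 / 2 : ℝ)).congr_fderiv ?_
  ext v
  simp only [smul_apply, ContinuousLinearMap.comp_id, coe_innerSL_apply, map_smul, nsmul_eq_mul,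
    smul_eq_mul, one_div, Nat.cast_ofNat]
  ring

noncomputable def conformalMap (a x : E) : E :=
  a + ((1 - ‖a‖ ^ 2) / ‖x + a‖ ^ 2) • (x + a)

variable [MeasurableSpace E]

noncomputable def conformalEnergyGradient (μ : Measure E) (a : E) : E :=
  -(μ.real univ / (1 - ‖a‖ ^ 2)) • a - ∫ x, (‖x + a‖ ^ 2)⁻¹ • (x + a) ∂μ

variable [FiniteDimensional ℝ E] [BorelSpace E] {μ : Measure E} [IsFiniteMeasure μ]

lemma integrable_inv_norm_sq_smul_add (hs : ∀ᵐ x ∂μ, ‖x‖ = 1) {a : E} (ha : ‖a‖ < 1) :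
    Integrable (fun x => (‖x + a‖ ^ 2)⁻¹ • (x + a)) μ := by
  refine .of_bound (by fun_prop) (1 - ‖a‖)⁻¹ ?_
  filter_upwards [hs] with x hx
  exact norm_inv_norm_sq_smul_add_le hx ha

lemma hasFDerivAt_integral_log_norm_add (hs : ∀ᵐ x ∂μ, ‖x‖ = 1) {a₀ : E} (ha₀ : ‖a₀‖ < 1) :
    HasFDerivAt (fun a => ∫ x, log ‖x + a‖ ∂μ)
      (innerSL ℝ (∫ x, (‖x + a₀‖ ^ 2)⁻¹ • (x + a₀) ∂μ)) a₀ := by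
  set ε := (1 - ‖a₀‖) / 2 with hε_eq
  have hε : 0 < ε := by linarith
  have hball : ∀ a ∈ ball a₀ ε, ‖a‖ < 1 ∧ ε ≤ 1 - ‖a‖ := by
    intro a ha
    have := norm_le_norm_add_norm_sub' a a₀
    rw [mem_ball, dist_eq_norm] at ha
    constructor <;> linarith
  rw [← (innerSL ℝ).integral_comp_comm (integrable_inv_norm_sq_smul_add hs ha₀)]
  refine hasFDerivAt_integral_of_dominated_of_fderiv_le (F := fun a x => log ‖x + a‖)
    (F' := fun a x => innerSL ℝ ((‖x + a‖ ^ 2)⁻¹ • (x + a))) (bound := fun _ => ε⁻¹)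
    (ball_mem_nhds a₀ hε) (.of_forall fun a => Measurable.aestronglyMeasurable (by fun_prop))
    (integrable_log_norm_add hs ha₀) (by fun_prop) ?_ (integrable_const _) ?_
  · filter_upwards [hs] with x hx a ha
    rw [innerSL_apply_norm]
    exact (norm_inv_norm_sq_smul_add_le hx (hball a ha).1).trans (inv_anti₀ hε (hball a ha).2)
  · filter_upwards [hs] with x hx a ha
    refine hasFDerivAt_log_norm_add x fun h => ?_
    have := one_sub_norm_le_norm_add hx a
    rw [h, norm_zero] at this
    linarith [(hball a ha).1]

lemma hasFDerivAt_conformalEnergy (hs : ∀ᵐ x ∂μ, ‖x‖ = 1) {a : E} (ha : ‖a‖ < 1) :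
    HasFDerivAt (conformalEnergy μ) (innerSL ℝ (conformalEnergyGradient μ a)) a := by
  have hne : 1 - ‖a‖ ^ 2 ≠ 0 := by nlinarith [norm_nonneg a]
  have hlog := ((((hasFDerivAt_id a).norm_sq).const_sub 1).log hne).const_mul (μ.real univ / 2)
  refine (hlog.sub (hasFDerivAt_integral_log_norm_add hs ha)).congr_fderiv ?_
  ext v
  simp only [conformalEnergyGradient, id_eq, ContinuousLinearMap.comp_id, sub_apply, neg_apply,
    smul_apply, coe_innerSL_apply, map_sub, map_neg, map_smul, smul_neg, neg_smul, nsmul_eq_mul,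
    smul_eq_mul, Nat.cast_ofNat]
  field_simp

lemma conformalEnergyGradient_eq_zero_of_isLocalMax (hs : ∀ᵐ x ∂μ, ‖x‖ = 1) {a : E}
    (ha : ‖a‖ < 1) (hmax : IsLocalMax (conformalEnergy μ) a) :
    conformalEnergyGradient μ a = 0 := by
  have h := congr($(hmax.hasFDerivAt_eq_zero (hasFDerivAt_conformalEnergy hs ha))
    (conformalEnergyGradient μ a))
  simpa using h

lemma integral_conformalMap_eq_neg_smul_conformalEnergyGradient (hs : ∀ᵐ x ∂μ, ‖x‖ = 1)
    {a : E} (ha : ‖a‖ < 1) :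
    ∫ x, conformalMap a x ∂μ = -(1 - ‖a‖ ^ 2) • conformalEnergyGradient μ a := by
  have hne : 1 - ‖a‖ ^ 2 ≠ 0 := by nlinarith [norm_nonneg a]
  have hsmul : ∀ x, conformalMap a x = a + (1 - ‖a‖ ^ 2) • (‖x + a‖ ^ 2)⁻¹ • (x + a) :=
    fun x => by rw [conformalMap, smul_smul, div_eq_mul_inv]
  simp_rw [hsmul]
  rw [integral_add (integrable_const a) ((integrable_inv_norm_sq_smul_add hs ha).fun_smul _),
    integral_const, integral_smul, conformalEnergyGradient, smul_sub, neg_smul, neg_smul,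
    smul_neg, neg_neg, smul_smul, mul_div_cancel₀ _ hne, neg_smul, sub_neg_eq_add]

variable [NullSingletonClass μ]

lemma exists_conformalEnergy_neg_on_sphere (hs : ∀ᵐ x ∂μ, ‖x‖ = 1) (hμ : μ ≠ 0) :
    ∃ ρ, 0 ≤ ρ ∧ ρ < 1 ∧ ∀ a ∈ sphere (0 : E) ρ, conformalEnergy μ a < 0 := by
  have hμK : μ (sphere (0 : E) 1)ᶜ = 0 :=
    measure_mono_null (fun x hx => by simpa using hx) (ae_iff.1 hs)
  obtain ⟨r, hr, hball⟩ := exists_pos_forall_measure_ball_lt (ε := μ univ / 4)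
    (isCompact_sphere 0 1) hμK (ENNReal.div_pos (Measure.measure_univ_pos.2 hμ).ne' (by norm_num))
  have hball_real : ∀ c, μ.real (ball c r) ≤ μ.real univ / 4 := fun c => by
    simpa [measureReal_def] using
      ENNReal.toReal_mono (ENNReal.div_lt_top (measure_ne_top μ univ) (by norm_num)).ne (hball c).le
  obtain ⟨C, hC⟩ := exists_conformalEnergy_le hs hr hball_real
  have : NeZero μ := ⟨hμ⟩
  have hM : 0 < μ.real univ / 4 := by have := measureReal_univ_pos (μ := μ); positivity
  obtain ⟨s, hlog, hs0, hsr⟩ :=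
    ((tendsto_log_nhdsGT_zero.eventually_lt_atBot (-C / (μ.real univ / 4))).and
      (Ioc_mem_nhdsGT (lt_min hr one_pos))).exists
  refine ⟨1 - s, by linarith [min_le_right r 1], by linarith, fun a ha => ?_⟩
  rw [mem_sphere_zero_iff_norm] at ha
  have := hC a (by linarith [min_le_left r 1]) (by linarith)
  rw [ha, sub_sub_cancel] at this
  linarith [(lt_div_iff₀' hM).1 hlog]

lemma exists_isLocalMax_conformalEnergy (hs : ∀ᵐ x ∂μ, ‖x‖ = 1) (hμ : μ ≠ 0) :
    ∃ a : E, ‖a‖ < 1 ∧ IsLocalMax (conformalEnergy μ) a := by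
  obtain ⟨ρ, hρ0, hρ1, hneg⟩ := exists_conformalEnergy_neg_on_sphere hs hμ
  have hcont : ContinuousOn (conformalEnergy μ) (closedBall 0 ρ) := fun a ha =>
    (hasFDerivAt_conformalEnergy hs ((mem_closedBall_zero_iff.1 ha).trans_lt hρ1)).continuousAt
      |>.continuousWithinAt
  obtain ⟨a, ha, hmax⟩ := (isCompact_closedBall (0 : E) ρ).exists_isLocalMax_mem_open
    ball_subset_closedBall hcont (mem_closedBall_self hρ0)
    (by simpa [closedBall_sdiff_ball, conformalEnergy_zero hs] using hneg) isOpen_ball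
  exact ⟨a, (mem_ball_zero_iff.1 ha).trans hρ1, hmax⟩

end InnerProductSpace

/-- Balancing lemma: for any nonzero finite atomless Borel measure supported on the
unit sphere `S³ ⊂ ℝ⁴`, some conformal transformation `ψ_a` has vanishing center of
mass. -/
theorem exists_balancing_conformal_transformation
    (μ : Measure (EuclideanSpace ℝ (Fin 4))) [IsFiniteMeasure μ] (hμ : μ ≠ 0)
    (hsupp : μ ({x : EuclideanSpace ℝ (Fin 4) | ‖x‖ = 1}ᶜ) = 0)
    (hatom : ∀ x : EuclideanSpace ℝ (Fin 4), μ {x} = 0) :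
    ∃ a : EuclideanSpace ℝ (Fin 4), ‖a‖ < 1 ∧
      (∫ x, (a + ((1 - ‖a‖ ^ 2) / (1 + 2 * ⟪a, x⟫ + ‖a‖ ^ 2)) • (x + a)) ∂μ)
        = 0 := by
  have hs : ∀ᵐ x ∂μ, ‖x‖ = 1 := ae_iff.2 hsupp
  have : NullSingletonClass μ := ⟨hatom⟩
  obtain ⟨a, ha, hmax⟩ := exists_isLocalMax_conformalEnergy hs hμ
  refine ⟨a, ha, ?_⟩
  have hψ : ∀ᵐ x ∂μ, a + ((1 - ‖a‖ ^ 2) / (1 + 2 * ⟪a, x⟫ + ‖a‖ ^ 2)) • (x + a) =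
      conformalMap a x := by
    filter_upwards [hs] with x hx
    rw [conformalMap, one_add_two_inner_add_norm_sq hx]
  rw [integral_congr_ae hψ, integral_conformalMap_eq_neg_smul_conformalEnergyGradient hs ha,
    conformalEnergyGradient_eq_zero_of_isLocalMax hs ha hmax, smul_zero]
end
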